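/- arXiv:1201.6226 — 4 statements merged into one kernel-verified Lean document; each statement's English description precedes it below -/
import Mathlib

section
/- Let f : [a,b] → ℝ be continuous and integrable on [a,b] with 0 ≤ a < b, and let p > 0 be fixed. If f is (α,m)-convex for some fixed (α,m) ∈ (0,1]², then ∫_a^b (x-a)^p (b-x)^p f(x) dx ≤ (b-a)^{2p+1} [β(p+α+1, p+1) f(a) + m(β(p+1, p+1) − β(p+α+1, p+1)) f(b/m)]. -/
open Real Set MeasureTheory intervalIntegral

noncomputable def beta (x y : ℝ) : ℝ := ∫ t in (0:ℝ)..1, t ^ (x-1) * (1-t) ^ (y-1)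

def AMConvexOn (s : Set ℝ) (α m : ℝ) (g : ℝ → ℝ) : Prop :=
  ∀ x ∈ s, ∀ y ∈ s, ∀ t ∈ Set.Icc (0:ℝ) 1, g (t*x + m*(1-t)*y) ≤ t ^ α * g x + m*(1 - t ^ α) * g y

/-! The substitution `x = t a + (1 - t) b` turns the integral into one over `[0, 1]` with weight
`(b - a)^(2p+1) t^p (1 - t)^p`; applying `(α,m)`-convexity to the pair `a`, `b/m` under the integral
and integrating the resulting bound term by term gives the two Beta integrals. -/

lemma integral_eq_sub_mul_integral_unitInterval (g : ℝ → ℝ) (a b : ℝ) :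
    ∫ x in a..b, g x = (b - a) * ∫ t in (0:ℝ)..1, g (t * a + (1 - t) * b) := by
  have h := smul_integral_comp_add_mul (a := 0) (b := 1) g (a - b) b
  simp only [mul_zero, add_zero, mul_one, add_sub_cancel, smul_eq_mul] at h
  rw [integral_symm, ← h]
  simp only [show ∀ t, b + (a - b) * t = t * a + (1 - t) * b from fun t => by ring]
  ring

lemma affine_mem_Icc {a b t : ℝ} (hab : a ≤ b) (ht : t ∈ Icc (0:ℝ) 1) :
    t * a + (1 - t) * b ∈ Icc a b :=
  ⟨by nlinarith [ht.2], by nlinarith [ht.1]⟩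

lemma sub_rpow_mul_sub_rpow_affine {a b t : ℝ} (hab : a < b) (ht : t ∈ Icc (0:ℝ) 1) (q r : ℝ) :
    (t * a + (1 - t) * b - a) ^ q * (b - (t * a + (1 - t) * b)) ^ r
      = (b - a) ^ (q + r) * (t ^ r * (1 - t) ^ q) := by
  have hba : 0 < b - a := sub_pos.2 hab
  rw [show t * a + (1 - t) * b - a = (b - a) * (1 - t) by ring,
    show b - (t * a + (1 - t) * b) = (b - a) * t by ring,
    mul_rpow hba.le (sub_nonneg.2 ht.2), mul_rpow hba.le ht.1, rpow_add hba]
  ring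

lemma integral_sub_rpow_mul_sub_rpow_mul {a b : ℝ} (hab : a < b) (q r : ℝ) (g : ℝ → ℝ) :
    ∫ x in a..b, (x - a) ^ q * (b - x) ^ r * g x
      = (b - a) ^ (q + r + 1)
          * ∫ t in (0:ℝ)..1, t ^ r * (1 - t) ^ q * g (t * a + (1 - t) * b) := by
  have hkernel : ∀ t ∈ uIcc (0:ℝ) 1,
      (t * a + (1 - t) * b - a) ^ q * (b - (t * a + (1 - t) * b)) ^ r * g (t * a + (1 - t) * b)
        = (b - a) ^ (q + r) * (t ^ r * (1 - t) ^ q * g (t * a + (1 - t) * b)) := by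
    intro t ht
    rw [uIcc_of_le zero_le_one] at ht
    rw [sub_rpow_mul_sub_rpow_affine hab ht]
    ring
  rw [integral_eq_sub_mul_integral_unitInterval, integral_congr hkernel,
    intervalIntegral.integral_const_mul, rpow_add_one (sub_pos.2 hab).ne']
  ring

lemma beta_add_one_add_one (q r : ℝ) :
    beta (q + 1) (r + 1) = ∫ t in (0:ℝ)..1, t ^ q * (1 - t) ^ r := by
  simp only [beta, add_sub_cancel_right]

lemma continuous_rpow_mul_one_sub_rpow {q r : ℝ} (hq : 0 ≤ q) (hr : 0 ≤ r) :
    Continuous fun t : ℝ => t ^ q * (1 - t) ^ r :=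
  (continuous_rpow_const hq).mul ((continuous_rpow_const hr).comp (continuous_const.sub
    continuous_id))

lemma integral_rpow_mul_one_sub_rpow_mul_affine {p q α : ℝ} (hp : 0 ≤ p) (hq : 0 ≤ q)
    (hα : 0 ≤ α) (m A B : ℝ) :
    ∫ t in (0:ℝ)..1, t ^ p * (1 - t) ^ q * (t ^ α * A + m * (1 - t ^ α) * B)
      = beta (p + α + 1) (q + 1) * A
          + m * (beta (p + 1) (q + 1) - beta (p + α + 1) (q + 1)) * B := by
  have hI₁ := (continuous_rpow_mul_one_sub_rpow (add_nonneg hp hα) hq).intervalIntegrable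
    (μ := volume) 0 1
  have hI₀ := (continuous_rpow_mul_one_sub_rpow hp hq).intervalIntegrable (μ := volume) 0 1
  have hsplit : ∀ t ∈ uIcc (0:ℝ) 1,
      t ^ p * (1 - t) ^ q * (t ^ α * A + m * (1 - t ^ α) * B)
        = A * (t ^ (p + α) * (1 - t) ^ q)
          + m * B * (t ^ p * (1 - t) ^ q - t ^ (p + α) * (1 - t) ^ q) := by
    intro t ht
    rw [uIcc_of_le zero_le_one] at ht
    rw [rpow_add_of_nonneg ht.1 hp hα]
    ring
  rw [integral_congr hsplit, integral_add (hI₁.const_mul A) ((hI₀.sub hI₁).const_mul _),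
    intervalIntegral.integral_const_mul, intervalIntegral.integral_const_mul,
    integral_sub hI₀ hI₁, beta_add_one_add_one, beta_add_one_add_one]
  ring

lemma AMConvexOn.apply_affine_le {s : Set ℝ} {α m : ℝ} {g : ℝ → ℝ} (hg : AMConvexOn s α m g)
    (hm : m ≠ 0) {x y t : ℝ} (hx : x ∈ s) (hy : y / m ∈ s) (ht : t ∈ Icc (0:ℝ) 1) :
    g (t * x + (1 - t) * y) ≤ t ^ α * g x + m * (1 - t ^ α) * g (y / m) := by
  have h := hg x hx (y / m) hy t ht
  rwa [show m * (1 - t) * (y / m) = (1 - t) * y by field_simp] at h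

theorem stmt4_general (a b p : ℝ) (f : ℝ → ℝ)
    (ha : 0 ≤ a) (hab : a < b) (hp : 0 < p)
    (hcont : ContinuousOn f (Set.Icc a b))
    (α m : ℝ) (hα : α ∈ Set.Ioc (0:ℝ) 1) (hm : m ∈ Set.Ioc (0:ℝ) 1)
    (hf : AMConvexOn (Set.Icc 0 (b/m)) α m f) :
    ∫ x in a..b, (x-a)^p * (b-x)^p * f x
      ≤ (b-a)^(2*p+1) * (beta (p+α+1) (p+1) * f a
          + m * (beta (p+1) (p+1) - beta (p+α+1) (p+1)) * f (b/m)) := by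
  have hbm : b ≤ b / m := le_div_self (ha.trans hab.le) hm.1 hm.2
  have hf_affine : ContinuousOn (fun t => f (t * a + (1 - t) * b)) (Icc 0 1) :=
    hcont.comp (by fun_prop) fun t ht => affine_mem_Icc hab.le ht
  have hbound : ∀ t ∈ Icc (0:ℝ) 1, t ^ p * (1 - t) ^ p * f (t * a + (1 - t) * b)
      ≤ t ^ p * (1 - t) ^ p * (t ^ α * f a + m * (1 - t ^ α) * f (b / m)) := fun t ht =>
    mul_le_mul_of_nonneg_left
      (hf.apply_affine_le hm.1.ne' ⟨ha, hab.le.trans hbm⟩ ⟨(ha.trans hab.le).trans hbm, le_rfl⟩ ht)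
      (mul_nonneg (rpow_nonneg ht.1 p) (rpow_nonneg (sub_nonneg.2 ht.2) p))
  have hweight := (continuous_rpow_mul_one_sub_rpow hp.le hp.le).continuousOn (s := Icc 0 1)
  have hpow : Continuous fun t : ℝ => t ^ α := continuous_rpow_const hα.1.le
  have hmono := integral_mono_on zero_le_one
    ((hweight.mul hf_affine).intervalIntegrable_of_Icc (μ := volume) zero_le_one)
    ((hweight.mul (by fun_prop)).intervalIntegrable_of_Icc (μ := volume) zero_le_one) hbound
  rw [integral_sub_rpow_mul_sub_rpow_mul hab, ← two_mul,
    ← integral_rpow_mul_one_sub_rpow_mul_affine hp.le hp.le hα.1.le]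
  exact mul_le_mul_of_nonneg_left hmono (by have := sub_pos.2 hab; positivity)

theorem stmt4 (a b p : ℝ) (f : ℝ → ℝ)
    (ha : 0 ≤ a) (hab : a < b) (hp : 0 < p)
    (hcont : ContinuousOn f (Set.Icc a b))
    (hint : IntervalIntegrable f volume a b)
    (α m : ℝ) (hα : α ∈ Set.Ioc (0:ℝ) 1) (hm : m ∈ Set.Ioc (0:ℝ) 1)
    (hf : AMConvexOn (Set.Icc 0 (b/m)) α m f) :
    ∫ x in a..b, (x-a)^p * (b-x)^p * f x
      ≤ (b-a)^(2*p+1) * (beta (p+α+1) (p+1) * f a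
          + m * (beta (p+1) (p+1) - beta (p+α+1) (p+1)) * f (b/m)) :=
  stmt4_general a b p f ha hab hp hcont α m hα hm hf
end

section
/- Let f : [a,b] → ℝ be continuous and integrable on [a,b] with 0 ≤ a < b, let k > 1, and suppose |f|^{k/(k-1)} is m-convex for some fixed m ∈ (0,1]. Then for any fixed p, q > 0, ∫_a^b (x-a)^p (b-x)^q f(x) dx ≤ (b-a)^{p+q+1} 2^{-(k-1)/k} [β(kp+1, kq+1)]^{1/k} [|f(a)|^{k/(k-1)} + m |f(b/m)|^{k/(k-1)}]^{(k-1)/k}. -/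
open Real Set MeasureTheory intervalIntegral

def MConvexOn (s : Set ℝ) (m : ℝ) (g : ℝ → ℝ) : Prop :=
  ∀ x ∈ s, ∀ y ∈ s, ∀ t ∈ Set.Icc (0:ℝ) 1, g (t*x + m*(1-t)*y) ≤ t * g x + m*(1-t) * g y

/-! The substitution x = (1-t)a + tb turns the integral into (b-a)^(p+q+1) times
∫₀¹ t^p (1-t)^q f((1-t)a + tb). Hölder's inequality with exponents k and k/(k-1) bounds this by
the k-th root of β(kp+1, kq+1) times a power of ∫₀¹ |f((1-t)a + tb)|^(k/(k-1)), and m-convexity at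
the points a and b/m (note m · (b/m) = b) bounds the integrand of the latter by
(1-t)|f(a)|^(k/(k-1)) + mt|f(b/m)|^(k/(k-1)), whose integral is half the bracket. -/

lemma ContinuousOn.memLp_restrict_Ioc {E : Type*} [NormedAddCommGroup E] {f : ℝ → E} {a b : ℝ}
    (hf : ContinuousOn f (Icc a b)) (r : ENNReal) : MemLp f r (volume.restrict (Ioc a b)) := by
  obtain ⟨C, hC⟩ := isCompact_Icc.exists_bound_of_continuousOn hf
  exact MemLp.of_bound ((hf.mono Ioc_subset_Icc_self).aestronglyMeasurable measurableSet_Ioc) C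
    (ae_restrict_of_forall_mem measurableSet_Ioc fun x hx => hC x (Ioc_subset_Icc_self hx))

theorem intervalIntegral.integral_mul_le_Lp_mul_Lq_of_continuousOn {a b k k' : ℝ} (hab : a ≤ b)
    (hkk' : k.HolderConjugate k') {F G : ℝ → ℝ}
    (hF : ContinuousOn F (Icc a b)) (hG : ContinuousOn G (Icc a b))
    (hF0 : ∀ x ∈ Icc a b, 0 ≤ F x) (hG0 : ∀ x ∈ Icc a b, 0 ≤ G x) :
    ∫ x in a..b, F x * G x ≤ (∫ x in a..b, F x ^ k) ^ (1/k) * (∫ x in a..b, G x ^ k') ^ (1/k') := by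
  simp only [integral_of_le hab]
  exact integral_mul_le_Lp_mul_Lq_of_nonneg hkk'
    (ae_restrict_of_forall_mem measurableSet_Ioc fun x hx => hF0 x (Ioc_subset_Icc_self hx))
    (ae_restrict_of_forall_mem measurableSet_Ioc fun x hx => hG0 x (Ioc_subset_Icc_self hx))
    (hF.memLp_restrict_Ioc _) (hG.memLp_restrict_Ioc _)

theorem integral_sub_rpow_mul_rpow_sub_mul_eq {a b : ℝ} (hab : a < b) (p q : ℝ) (f : ℝ → ℝ) :
    ∫ x in a..b, (x-a)^p * (b-x)^q * f x
      = (b-a)^(p+q+1) * ∫ t in (0:ℝ)..1, t^p * (1-t)^q * f ((1-t)*a + t*b) := by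
  have hc : 0 < b - a := sub_pos.2 hab
  have hsubst := integral_comp_mul_add (a := 0) (b := 1) (fun x => (x-a)^p * (b-x)^q * f x) hc.ne' a
  simp only [mul_zero, zero_add, mul_one, sub_add_cancel] at hsubst
  have hintegrand : ∀ t ∈ uIcc (0:ℝ) 1, ((b-a) * t + a - a)^p * (b - ((b-a) * t + a))^q
      * f ((b-a) * t + a) = (b-a)^(p+q) * (t^p * (1-t)^q * f ((1-t)*a + t*b)) := by
    intro t ht
    rw [uIcc_of_le zero_le_one] at ht
    rw [show (b-a) * t + a - a = (b-a) * t by ring, show b - ((b-a) * t + a) = (b-a) * (1-t) by ring,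
      show (b-a) * t + a = (1-t)*a + t*b by ring, mul_rpow hc.le ht.1,
      mul_rpow hc.le (sub_nonneg.2 ht.2), rpow_add hc]
    ring
  rw [integral_congr hintegrand, intervalIntegral.integral_const_mul, smul_eq_mul] at hsubst
  rw [rpow_add hc, rpow_one, mul_comm _ (b-a), mul_assoc, hsubst, ← mul_assoc,
    mul_inv_cancel₀ hc.ne', one_mul]

theorem integral_rpow_mul_one_sub_rpow_rpow_eq_beta (p q k : ℝ) :
    ∫ t in (0:ℝ)..1, (t^p * (1-t)^q) ^ k = beta (k*p+1) (k*q+1) := by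
  refine integral_congr fun t ht => ?_
  rw [uIcc_of_le zero_le_one] at ht
  have ht' : 0 ≤ 1 - t := sub_nonneg.2 ht.2
  rw [mul_rpow (rpow_nonneg ht.1 _) (rpow_nonneg ht' _), ← rpow_mul ht.1, ← rpow_mul ht']
  ring_nf

lemma beta_nonneg (x y : ℝ) : 0 ≤ beta x y :=
  intervalIntegral.integral_nonneg zero_le_one fun _ ht =>
    mul_nonneg (rpow_nonneg ht.1 _) (rpow_nonneg (sub_nonneg.2 ht.2) _)

theorem integral_rpow_mul_one_sub_rpow_mul_le {p q k : ℝ} (hp : 0 ≤ p) (hq : 0 ≤ q) (hk : 1 < k)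
    {g : ℝ → ℝ} (hg : ContinuousOn g (Icc 0 1)) :
    ∫ t in (0:ℝ)..1, t^p * (1-t)^q * g t
      ≤ beta (k*p+1) (k*q+1) ^ (1/k) * (∫ t in (0:ℝ)..1, |g t| ^ (k/(k-1))) ^ ((k-1)/k) := by
  have hF : ContinuousOn (fun t : ℝ => t^p * (1-t)^q) (Icc 0 1) :=
    (continuousOn_id.rpow_const fun _ _ => Or.inr hp).mul
      ((continuousOn_const.sub continuousOn_id).rpow_const fun _ _ => Or.inr hq)
  have hF0 : ∀ t ∈ Icc (0:ℝ) 1, 0 ≤ t^p * (1-t)^q := fun t ht =>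
    mul_nonneg (rpow_nonneg ht.1 _) (rpow_nonneg (sub_nonneg.2 ht.2) _)
  rw [← integral_rpow_mul_one_sub_rpow_rpow_eq_beta, ← one_div_div k (k-1)]
  calc ∫ t in (0:ℝ)..1, t^p * (1-t)^q * g t
      ≤ ∫ t in (0:ℝ)..1, t^p * (1-t)^q * |g t| :=
        integral_mono_on zero_le_one ((hF.mul hg).intervalIntegrable_of_Icc zero_le_one)
          ((hF.mul hg.abs).intervalIntegrable_of_Icc zero_le_one)
          fun t ht => mul_le_mul_of_nonneg_left (le_abs_self _) (hF0 t ht)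
    _ ≤ _ := intervalIntegral.integral_mul_le_Lp_mul_Lq_of_continuousOn zero_le_one
          (HolderConjugate.conjExponent hk : k.HolderConjugate (k/(k-1))) hF hg.abs hF0
          fun _ _ => abs_nonneg _

theorem MConvexOn.intervalIntegral_le {s : Set ℝ} {m : ℝ} {φ : ℝ → ℝ} (hφ : MConvexOn s m φ)
    {x y : ℝ} (hx : x ∈ s) (hy : y ∈ s)
    (hint : IntervalIntegrable (fun t => φ ((1-t)*x + t*(m*y))) volume 0 1) :
    ∫ t in (0:ℝ)..1, φ ((1-t)*x + t*(m*y)) ≤ (φ x + m * φ y) / 2 := by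
  have hpoint : ∀ t ∈ Icc (0:ℝ) 1, φ ((1-t)*x + t*(m*y)) ≤ (1-t) * φ x + t * (m * φ y) := by
    intro t ht
    have h := hφ x hx y hy (1-t) ⟨sub_nonneg.2 ht.2, sub_le_self _ ht.1⟩
    rw [sub_sub_cancel] at h
    convert h using 2 <;> ring
  calc ∫ t in (0:ℝ)..1, φ ((1-t)*x + t*(m*y))
      ≤ ∫ t in (0:ℝ)..1, (1-t) * φ x + t * (m * φ y) :=
        integral_mono_on zero_le_one hint (Continuous.intervalIntegrable (by fun_prop) _ _) hpoint
    _ = (φ x + m * φ y) / 2 := by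
        rw [intervalIntegral.integral_add (Continuous.intervalIntegrable (by fun_prop) _ _)
          (Continuous.intervalIntegrable (by fun_prop) _ _), intervalIntegral.integral_mul_const,
          intervalIntegral.integral_mul_const, intervalIntegral.integral_comp_sub_left (fun t => t)]
        norm_num
        ring

theorem stmt7_general (a b p q : ℝ) (f : ℝ → ℝ)
    (ha : 0 ≤ a) (hab : a < b) (hp : 0 < p) (hq : 0 < q)
    (hcont : ContinuousOn f (Set.Icc a b))
    (k : ℝ) (hk : 1 < k)
    (m : ℝ) (hm : m ∈ Set.Ioc (0:ℝ) 1)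
    (hf : MConvexOn (Set.Icc 0 (b/m)) m (fun x => |f x| ^ (k/(k-1)))) :
    ∫ x in a..b, (x-a)^p * (b-x)^q * f x
      ≤ (b-a)^(p+q+1) * (2:ℝ)^(-((k-1)/k)) * (beta (k*p+1) (k*q+1))^(1/k)
          * (|f a| ^ (k/(k-1)) + m * |f (b/m)| ^ (k/(k-1))) ^ ((k-1)/k) := by
  obtain ⟨hm0, hm1⟩ := hm
  have hb0 : 0 ≤ b := ha.trans hab.le
  have hb : m * (b/m) = b := mul_div_cancel₀ b hm0.ne'
  set g : ℝ → ℝ := fun t => f ((1-t)*a + t*b)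
  have hg : ContinuousOn g (Icc 0 1) := hcont.comp (by fun_prop) fun t ht =>
    convex_Icc a b (left_mem_Icc.2 hab.le) (right_mem_Icc.2 hab.le) (sub_nonneg.2 ht.2) ht.1
      (sub_add_cancel 1 t)
  have hconv : ∫ t in (0:ℝ)..1, |g t| ^ (k/(k-1))
      ≤ (|f a| ^ (k/(k-1)) + m * |f (b/m)| ^ (k/(k-1))) / 2 := by
    have h := hf.intervalIntegral_le ⟨ha, hab.le.trans (le_div_self hb0 hm0 hm1)⟩
      ⟨div_nonneg hb0 hm0.le, le_rfl⟩ (by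
        rw [hb]
        exact (hg.abs.rpow_const fun _ _ => Or.inr (by positivity)).intervalIntegrable_of_Icc
          zero_le_one)
    rwa [hb] at h
  rw [integral_sub_rpow_mul_rpow_sub_mul_eq hab]
  calc (b-a)^(p+q+1) * ∫ t in (0:ℝ)..1, t^p * (1-t)^q * g t
      ≤ (b-a)^(p+q+1) * (beta (k*p+1) (k*q+1) ^ (1/k)
          * (∫ t in (0:ℝ)..1, |g t| ^ (k/(k-1))) ^ ((k-1)/k)) := by
        gcongr
        exact integral_rpow_mul_one_sub_rpow_mul_le hp.le hq.le hk hg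
    _ ≤ (b-a)^(p+q+1) * (beta (k*p+1) (k*q+1) ^ (1/k)
          * ((|f a| ^ (k/(k-1)) + m * |f (b/m)| ^ (k/(k-1))) / 2) ^ ((k-1)/k)) := by
        gcongr
        · exact rpow_nonneg (beta_nonneg _ _) _
        · exact intervalIntegral.integral_nonneg zero_le_one fun _ _ => by positivity
    _ = _ := by
        rw [div_rpow (by positivity) zero_le_two, rpow_neg zero_le_two]
        ring

theorem stmt7 (a b p q : ℝ) (f : ℝ → ℝ)
    (ha : 0 ≤ a) (hab : a < b) (hp : 0 < p) (hq : 0 < q)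
    (hcont : ContinuousOn f (Set.Icc a b))
    (hint : IntervalIntegrable f volume a b)
    (k : ℝ) (hk : 1 < k)
    (m : ℝ) (hm : m ∈ Set.Ioc (0:ℝ) 1)
    (hf : MConvexOn (Set.Icc 0 (b/m)) m (fun x => |f x| ^ (k/(k-1)))) :
    ∫ x in a..b, (x-a)^p * (b-x)^q * f x
      ≤ (b-a)^(p+q+1) * (2:ℝ)^(-((k-1)/k)) * (beta (k*p+1) (k*q+1))^(1/k)
          * (|f a| ^ (k/(k-1)) + m * |f (b/m)| ^ (k/(k-1))) ^ ((k-1)/k) :=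
  stmt7_general a b p q f ha hab hp hq hcont k hk m hm hf
end

section
/- Let f : [a,b] → ℝ be continuous and integrable on [a,b] with 0 ≤ a < b, let k > 1, and suppose |f|^{k/(k-1)} is quasi-convex on [a,b]. Then for any fixed p, q > 0, ∫_a^b (x-a)^p (b-x)^q f(x) dx ≤ (b-a)^{p+q+1} [β(kp+1, kq+1)]^{1/k} (max{|f(a)|^{k/(k-1)}, |f(b)|^{k/(k-1)}})^{(k-1)/k}. -/
open Real Set MeasureTheory intervalIntegral

def QuasiConvexOn' (s : Set ℝ) (g : ℝ → ℝ) : Prop :=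
  ∀ x ∈ s, ∀ y ∈ s, ∀ lam ∈ Set.Icc (0:ℝ) 1, g (lam*x + (1-lam)*y) ≤ max (g x) (g y)

/-!
Quasi-convexity of `|f| ^ (k/(k-1))` bounds it on `[a, b]` by its larger endpoint value `M`, so
`|f| ≤ M ^ ((k-1)/k)` there. The substitution `x = a + (b-a) t` turns the remaining weight integral
into `(b-a)^(p+q+1) ∫₀¹ t^p (1-t)^q`, and Hölder's inequality with exponents `k` and `k/(k-1)`
against the constant `1` bounds the latter by `β(kp+1, kq+1) ^ (1/k)`.
-/

theorem QuasiConvexOn'.le_max_of_mem_Icc {a b x : ℝ} {g : ℝ → ℝ}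
    (hg : QuasiConvexOn' (Icc a b) g) (hx : x ∈ Icc a b) : g x ≤ max (g a) (g b) := by
  have hab : a ≤ b := hx.1.trans hx.2
  rw [← segment_eq_Icc hab] at hx
  obtain ⟨lam, mu, hlam, hmu, hsum, rfl⟩ := hx
  obtain rfl : mu = 1 - lam := by linarith
  simpa using hg a (left_mem_Icc.2 hab) b (right_mem_Icc.2 hab) lam ⟨hlam, by linarith⟩

theorem integral_le_integral_rpow_rpow_one_div {Ω : Type*} [MeasurableSpace Ω] {μ : Measure Ω}
    [IsProbabilityMeasure μ] {g : Ω → ℝ} {k : ℝ} (hk : 1 < k) (hg0 : 0 ≤ᵐ[μ] g)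
    (hg : MemLp g (ENNReal.ofReal k) μ) :
    ∫ x, g x ∂μ ≤ (∫ x, g x ^ k ∂μ) ^ (1 / k) := by
  simpa using integral_mul_le_Lp_mul_Lq_of_nonneg (Real.HolderConjugate.conjExponent hk) hg0
    (Filter.Eventually.of_forall fun _ => zero_le_one) hg (memLp_const (1 : ℝ))

theorem integral_unitInterval_le_integral_rpow_rpow_one_div {g : ℝ → ℝ} {k : ℝ} (hk : 1 < k)
    (hg : ContinuousOn g (Icc 0 1)) (hg0 : ∀ t ∈ Icc (0:ℝ) 1, 0 ≤ g t) :
    ∫ t in (0:ℝ)..1, g t ≤ (∫ t in (0:ℝ)..1, g t ^ k) ^ (1 / k) := by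
  have : IsProbabilityMeasure (volume.restrict (Ioc (0:ℝ) 1)) := ⟨by simp⟩
  obtain ⟨C, hC⟩ := isCompact_Icc.exists_bound_of_continuousOn hg
  have hmem : MemLp g (ENNReal.ofReal k) (volume.restrict (Ioc (0:ℝ) 1)) :=
    MemLp.of_bound ((hg.mono Ioc_subset_Icc_self).aestronglyMeasurable measurableSet_Ioc) C
      ((ae_restrict_iff' measurableSet_Ioc).2
        (.of_forall fun t ht => hC t (Ioc_subset_Icc_self ht)))
  have hnn : 0 ≤ᵐ[volume.restrict (Ioc (0:ℝ) 1)] g :=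
    (ae_restrict_iff' measurableSet_Ioc).2 (.of_forall fun t ht => hg0 t (Ioc_subset_Icc_self ht))
  simp only [integral_of_le zero_le_one]
  exact integral_le_integral_rpow_rpow_one_div hk hnn hmem

theorem integral_rpow_mul_one_sub_rpow_le_beta {p q k : ℝ} (hp : 0 ≤ p) (hq : 0 ≤ q)
    (hk : 1 < k) :
    ∫ t in (0:ℝ)..1, t ^ p * (1 - t) ^ q ≤ beta (k * p + 1) (k * q + 1) ^ (1 / k) := by
  have hbeta : beta (k * p + 1) (k * q + 1) = ∫ t in (0:ℝ)..1, (t ^ p * (1 - t) ^ q) ^ k := by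
    refine integral_congr fun t ht => ?_
    rw [uIcc_of_le zero_le_one] at ht
    have h1t : 0 ≤ 1 - t := by linarith [ht.2]
    rw [add_sub_cancel_right, add_sub_cancel_right,
      mul_rpow (rpow_nonneg ht.1 _) (rpow_nonneg h1t _),
      ← rpow_mul ht.1, ← rpow_mul h1t, mul_comm p, mul_comm q]
  rw [hbeta]
  refine integral_unitInterval_le_integral_rpow_rpow_one_div hk ?_ fun t ht => ?_
  · exact ((continuous_rpow_const hp).continuousOn).mul
      ((continuous_rpow_const hq).comp (continuous_sub_left 1)).continuousOn
  · have h1t : 0 ≤ 1 - t := by linarith [ht.2]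
    have := ht.1
    positivity

theorem integral_sub_rpow_mul_rpow_sub {a b : ℝ} (hab : a < b) (p q : ℝ) :
    ∫ x in a..b, (x - a) ^ p * (b - x) ^ q
      = (b - a) ^ (p + q + 1) * ∫ t in (0:ℝ)..1, t ^ p * (1 - t) ^ q := by
  have hba : 0 < b - a := sub_pos.2 hab
  have hsub := integral_comp_mul_add (a := 0) (b := 1)
    (fun x => (x - a) ^ p * (b - x) ^ q) hba.ne' a
  have hscale : ∫ t in (0:ℝ)..1, ((b - a) * t + a - a) ^ p * (b - ((b - a) * t + a)) ^ q
      = (b - a) ^ p * (b - a) ^ q * ∫ t in (0:ℝ)..1, t ^ p * (1 - t) ^ q := by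
    rw [← intervalIntegral.integral_const_mul]
    refine integral_congr fun t ht => ?_
    rw [uIcc_of_le zero_le_one] at ht
    have e1 : (b - a) * t + a - a = (b - a) * t := by ring
    have e2 : b - ((b - a) * t + a) = (b - a) * (1 - t) := by ring
    rw [e1, e2, mul_rpow hba.le ht.1, mul_rpow hba.le (by linarith [ht.2])]
    ring
  simp only [mul_zero, zero_add, mul_one, sub_add_cancel, hscale, smul_eq_mul] at hsub
  rw [eq_inv_mul_iff_mul_eq₀ hba.ne'] at hsub
  rw [← hsub, rpow_add hba, rpow_add hba, rpow_one]
  ring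

theorem integral_mul_le_integral_mul_const_of_abs_le {w f : ℝ → ℝ} {a b C : ℝ}
    (hab : a ≤ b)
    (hw : ContinuousOn w (Icc a b)) (hf : IntervalIntegrable f volume a b)
    (hw0 : ∀ x ∈ Icc a b, 0 ≤ w x) (hfC : ∀ x ∈ Icc a b, |f x| ≤ C) :
    ∫ x in a..b, w x * f x ≤ (∫ x in a..b, w x) * C := by
  rw [← intervalIntegral.integral_mul_const]
  refine integral_mono_on hab (hf.continuousOn_mul (by rwa [uIcc_of_le hab]))
    ((hw.mul continuousOn_const).intervalIntegrable_of_Icc hab) fun x hx => ?_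
  exact mul_le_mul_of_nonneg_left ((le_abs_self _).trans (hfC x hx)) (hw0 x hx)

theorem stmt13_general (a b p q : ℝ) (f : ℝ → ℝ)
    (hab : a < b) (hp : 0 < p) (hq : 0 < q)
    (hint : IntervalIntegrable f volume a b)
    (k : ℝ) (hk : 1 < k)
    (hf : QuasiConvexOn' (Set.Icc a b) (fun x => |f x| ^ (k/(k-1)))) :
    ∫ x in a..b, (x-a)^p * (b-x)^q * f x
      ≤ (b-a)^(p+q+1) * (beta (k*p+1) (k*q+1))^(1/k)
          * (max (|f a| ^ (k/(k-1))) (|f b| ^ (k/(k-1)))) ^ ((k-1)/k) := by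
  set M := max (|f a| ^ (k/(k-1))) (|f b| ^ (k/(k-1)))
  have hf_bound : ∀ x ∈ Icc a b, |f x| ≤ M ^ ((k-1)/k) := fun x hx => by
    rw [← inv_div, le_rpow_inv_iff_of_pos (abs_nonneg _) (by positivity)
      (div_pos (by linarith) (by linarith))]
    exact hf.le_max_of_mem_Icc hx
  have hweight_cont : ContinuousOn (fun x => (x-a)^p * (b-x)^q) (Icc a b) :=
    ((continuous_rpow_const hp.le).comp (continuous_sub_right a)).continuousOn.mul
      ((continuous_rpow_const hq.le).comp (continuous_sub_left b)).continuousOn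
  have hweight_nonneg : ∀ x ∈ Icc a b, 0 ≤ (x-a)^p * (b-x)^q := fun x hx =>
    mul_nonneg (rpow_nonneg (sub_nonneg.2 hx.1) _) (rpow_nonneg (sub_nonneg.2 hx.2) _)
  calc ∫ x in a..b, (x-a)^p * (b-x)^q * f x
      ≤ (∫ x in a..b, (x-a)^p * (b-x)^q) * M ^ ((k-1)/k) :=
        integral_mul_le_integral_mul_const_of_abs_le hab.le hweight_cont hint hweight_nonneg
          hf_bound
    _ = (b-a)^(p+q+1) * (∫ t in (0:ℝ)..1, t^p * (1-t)^q) * M ^ ((k-1)/k) := by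
        rw [integral_sub_rpow_mul_rpow_sub hab]
    _ ≤ (b-a)^(p+q+1) * (beta (k*p+1) (k*q+1))^(1/k) * M ^ ((k-1)/k) := by
        gcongr
        exact integral_rpow_mul_one_sub_rpow_le_beta hp.le hq.le hk

theorem stmt13 (a b p q : ℝ) (f : ℝ → ℝ)
    (ha : 0 ≤ a) (hab : a < b) (hp : 0 < p) (hq : 0 < q)
    (hcont : ContinuousOn f (Set.Icc a b))
    (hint : IntervalIntegrable f volume a b)
    (k : ℝ) (hk : 1 < k)
    (hf : QuasiConvexOn' (Set.Icc a b) (fun x => |f x| ^ (k/(k-1)))) :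
    ∫ x in a..b, (x-a)^p * (b-x)^q * f x
      ≤ (b-a)^(p+q+1) * (beta (k*p+1) (k*q+1))^(1/k)
          * (max (|f a| ^ (k/(k-1))) (|f b| ^ (k/(k-1)))) ^ ((k-1)/k) :=
  stmt13_general a b p q f hab hp hq hint k hk hf
end

section
/- Let f : [a,b] → ℝ be continuous and integrable on [a,b] with 0 ≤ a < b, and suppose f is m-convex on [a,b] for some fixed m ∈ (0,1]. Then for any fixed p, q > 0, ∫_a^b (x-a)^p (b-x)^q f(x) dx ≤ (b-a)^{p+q+1} [β(q+2, p+1) f(a) + m β(q+1, p+2) f(b/m)]. -/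
/-
With t = (b - x)/(b - a) one has x = t a + m (1 - t) (b/m), so m-convexity bounds f x by
t f(a) + m (1 - t) f(b/m). Multiplying by the weight (x - a)^p (b - x)^q and integrating leaves two
integrals of the same shape, and the substitution x = b - (b - a) t turns each into a beta integral.
-/

open Real Set MeasureTheory intervalIntegral

lemma integral_sub_rpow_mul_sub_rpow {a b : ℝ} (hab : a < b) (p q : ℝ) :
    ∫ x in a..b, (x - a) ^ p * (b - x) ^ q = (b - a) ^ (p + q + 1) * beta (q + 1) (p + 1) := by
  have hba : 0 < b - a := sub_pos.2 hab
  set g : ℝ → ℝ := fun x => (x - a) ^ p * (b - x) ^ q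
  have hsubst : ∫ t in (0:ℝ)..1, g (b - (b - a) * t) = (b - a)⁻¹ * ∫ x in a..b, g x := by
    rw [integral_comp_sub_mul _ hba.ne', smul_eq_mul, mul_one, mul_zero, sub_sub_cancel,
      sub_zero]
  have hscale :
      ∫ t in (0:ℝ)..1, g (b - (b - a) * t) = (b - a) ^ (p + q) * beta (q + 1) (p + 1) := by
    simp only [beta, add_sub_cancel_right, ← intervalIntegral.integral_const_mul]
    refine integral_congr fun t ht => ?_
    rw [uIcc_of_le zero_le_one] at ht
    simp only [g, show b - (b - a) * t - a = (b - a) * (1 - t) by ring,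
      show b - (b - (b - a) * t) = (b - a) * t by ring]
    rw [mul_rpow hba.le (sub_nonneg.2 ht.2), mul_rpow hba.le ht.1, rpow_add hba]
    ring
  rw [hscale, eq_inv_mul_iff_mul_eq₀ hba.ne'] at hsubst
  rw [← hsubst, rpow_add_one hba.ne']
  ring

lemma MConvexOn.le_of_mem_Icc {s : Set ℝ} {m : ℝ} {f : ℝ → ℝ} (hf : MConvexOn s m f)
    (hm : m ≠ 0) {a b x : ℝ} (ha : a ∈ s) (hb : b / m ∈ s) (hab : a < b) (hx : x ∈ Icc a b) :
    f x ≤ (b - x) / (b - a) * f a + m * ((x - a) / (b - a)) * f (b / m) := by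
  have hba : 0 < b - a := sub_pos.2 hab
  have h := hf a ha (b / m) hb ((b - x) / (b - a))
    ⟨div_nonneg (sub_nonneg.2 hx.2) hba.le, (div_le_one hba).2 (by linarith [hx.1])⟩
  rw [show 1 - (b - x) / (b - a) = (x - a) / (b - a) by field_simp; ring] at h
  convert h using 2
  field_simp
  ring

lemma MConvexOn.sub_rpow_mul_sub_rpow_mul_le {s : Set ℝ} {m : ℝ} {f : ℝ → ℝ}
    (hf : MConvexOn s m f) (hm : m ≠ 0) {a b p q x : ℝ} (ha : a ∈ s) (hb : b / m ∈ s)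
    (hab : a < b) (hp : p + 1 ≠ 0) (hq : q + 1 ≠ 0) (hx : x ∈ Icc a b) :
    (x - a) ^ p * (b - x) ^ q * f x ≤
      f a / (b - a) * ((x - a) ^ p * (b - x) ^ (q + 1)) +
        m * f (b / m) / (b - a) * ((x - a) ^ (p + 1) * (b - x) ^ q) := by
  have hxa : 0 ≤ x - a := sub_nonneg.2 hx.1
  have hbx : 0 ≤ b - x := sub_nonneg.2 hx.2
  calc (x - a) ^ p * (b - x) ^ q * f x
      ≤ (x - a) ^ p * (b - x) ^ q *
          ((b - x) / (b - a) * f a + m * ((x - a) / (b - a)) * f (b / m)) :=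
        mul_le_mul_of_nonneg_left (hf.le_of_mem_Icc hm ha hb hab hx) (by positivity)
    _ = _ := by
      rw [rpow_add_one' hxa hp, rpow_add_one' hbx hq]
      ring

theorem stmt17_general (a b p q : ℝ) (f : ℝ → ℝ)
    (ha : 0 ≤ a) (hab : a < b) (hp : 0 < p) (hq : 0 < q)
    (hint : IntervalIntegrable f volume a b)
    (m : ℝ) (hm : m ∈ Set.Ioc (0:ℝ) 1)
    (hf : MConvexOn (Set.Icc 0 (b/m)) m f) :
    ∫ x in a..b, (x-a)^p * (b-x)^q * f x
      ≤ (b-a)^(p+q+1) * (beta (q+2) (p+1) * f a + m * beta (q+1) (p+2) * f (b/m)) := by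
  obtain ⟨hm0, hm1⟩ := hm
  have hba : 0 < b - a := sub_pos.2 hab
  have hbm : b ≤ b / m := le_div_self (ha.trans hab.le) hm0 hm1
  have hw : Continuous fun x : ℝ => (x - a) ^ p * (b - x) ^ q := by
    fun_prop (disch := positivity)
  have hg₁ : IntervalIntegrable (fun x => (x - a) ^ p * (b - x) ^ (q + 1)) volume a b := by
    apply Continuous.intervalIntegrable; fun_prop (disch := positivity)
  have hg₂ : IntervalIntegrable (fun x => (x - a) ^ (p + 1) * (b - x) ^ q) volume a b := by
    apply Continuous.intervalIntegrable; fun_prop (disch := positivity)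
  calc ∫ x in a..b, (x - a) ^ p * (b - x) ^ q * f x
      ≤ ∫ x in a..b, f a / (b - a) * ((x - a) ^ p * (b - x) ^ (q + 1)) +
          m * f (b / m) / (b - a) * ((x - a) ^ (p + 1) * (b - x) ^ q) :=
        integral_mono_on hab.le (hint.continuousOn_mul hw.continuousOn)
          ((hg₁.const_mul _).add (hg₂.const_mul _))
          fun x hx => hf.sub_rpow_mul_sub_rpow_mul_le hm0.ne' ⟨ha, hab.le.trans hbm⟩
            ⟨ha.trans (hab.le.trans hbm), le_rfl⟩ hab (by positivity) (by positivity) hx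
    _ = _ := by
      rw [intervalIntegral.integral_add (hg₁.const_mul _) (hg₂.const_mul _),
        intervalIntegral.integral_const_mul, intervalIntegral.integral_const_mul,
        integral_sub_rpow_mul_sub_rpow hab, integral_sub_rpow_mul_sub_rpow hab,
        show p + (q + 1) + 1 = p + q + 1 + 1 by ring, show p + 1 + q + 1 = p + q + 1 + 1 by ring,
        show q + 1 + 1 = q + 2 by ring, show p + 1 + 1 = p + 2 by ring, rpow_add_one hba.ne']
      field_simp

theorem stmt17 (a b p q : ℝ) (f : ℝ → ℝ)
    (ha : 0 ≤ a) (hab : a < b) (hp : 0 < p) (hq : 0 < q)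
    (hcont : ContinuousOn f (Set.Icc a b))
    (hint : IntervalIntegrable f volume a b)
    (m : ℝ) (hm : m ∈ Set.Ioc (0:ℝ) 1)
    (hf : MConvexOn (Set.Icc 0 (b/m)) m f) :
    ∫ x in a..b, (x-a)^p * (b-x)^q * f x
      ≤ (b-a)^(p+q+1) * (beta (q+2) (p+1) * f a + m * beta (q+1) (p+2) * f (b/m)) :=
  stmt17_general a b p q f ha hab hp hq hint m hm hf
end
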